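/- Let G be a finite group with Φ(G) = 1, and let N₁ = T be a minimal normal subgroup with T nonabelian simple, and N₂ = (C_p)^a another minimal normal subgroup with a ≥ 2. Suppose J < T is a subgroup with |J|² > |T|. Then H₁ = J and H₂ = J × K, where K < N₂ has order p^{a−1}, are non-conjugate core-free subgroups of G with b(G, H_i) ≥ 3 for i = 1,2; in particular α(G) ≥ 2. -/

import Mathlib

/-!
Since `N₁` is nonabelian and `N₂` is abelian, the two minimal normal subgroups are distinct,
hence disjoint and commuting, so `N₁ ⊔ N₂ = N₁ × N₂` and `J ⊔ K = J × K` with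
`(J ⊔ K) ⊓ N₁ = J` and `(J ⊔ K) ⊓ N₂ = K`. Core-freeness follows from minimality; for `J ⊔ K`
one also needs that a normal subgroup meeting `N₁` trivially centralizes `N₁`, while, `N₁`
having trivial center, the centralizer of `N₁` meets `N₁ × N₂` only in `N₂`. The conjugates of
`J` lie in `N₁`, which does not contain `K ≠ 1`. For the base sizes, two subgroups `A, B` of a
group `N` with `|N| < |A||B|` must intersect nontrivially, and
`|N₁ × N₂| ≤ |N₁| p^a < |J|² p^(2a-2) ≤ |J ⊔ K|²` because `a ≥ 2`.
-/

/-- The conjugate subgroup `g⁻¹ H g`. -/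
def conjSub {G : Type*} [Group G] (H : Subgroup G) (g : G) : Subgroup G :=
  H.map (MulAut.conj g).toMonoidHom

/-- `N` is a minimal normal subgroup of `G`. -/
def IsMinNormal {G : Type*} [Group G] (N : Subgroup G) : Prop :=
  N ≠ ⊥ ∧ N.Normal ∧ ∀ M : Subgroup G, M.Normal → M ≤ N → M = ⊥ ∨ M = N

open Subgroup
open scoped Pointwise

section

variable {G : Type*} [Group G]

namespace Subgroup

theorem sup_inf_eq_left_of_disjoint {A B C : Subgroup G} (hAB : A ≤ normalizer (B : Set G))
    (hAC : A ≤ C) (hBC : Disjoint B C) : (A ⊔ B) ⊓ C = A := by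
  apply SetLike.coe_injective
  rw [coe_inf, coe_mul_of_left_le_normalizer_right A B hAB, ← mul_inf_assoc A B C hAC,
    hBC.eq_bot, coe_bot, Set.singleton_one, mul_one]

theorem sup_inf_eq_right_of_disjoint {A B C : Subgroup G} (hAB : A ≤ normalizer (B : Set G))
    (hBC : B ≤ C) (hAC : Disjoint A C) : (A ⊔ B) ⊓ C = B := by
  apply SetLike.coe_injective
  rw [coe_inf, coe_mul_of_left_le_normalizer_right A B hAB, Set.inter_comm,
    ← inf_mul_assoc C A B hBC, hAC.symm.eq_bot, coe_bot, Set.singleton_one, one_mul]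

theorem le_centralizer_of_disjoint {M N : Subgroup G} (hM : M.Normal) (hN : N.Normal)
    (h : Disjoint M N) : M ≤ centralizer N :=
  fun m hm n hn => (commute_of_normal_of_disjoint M N hM hN h m n hm hn).eq.symm

theorem card_mul_card_le_card_sup [Finite G] {A B : Subgroup G} (h : Disjoint A B) :
    Nat.card A * Nat.card B ≤ Nat.card ↥(A ⊔ B) := by
  rw [← Nat.card_prod]
  refine Nat.card_le_card_of_injective
    (fun x => ⟨x.1 * x.2, mul_mem (mem_sup_left x.1.2) (mem_sup_right x.2.2)⟩) fun x y hxy => ?_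
  exact mul_injective_of_disjoint h (congrArg Subtype.val hxy)

theorem card_sup_le_of_normal (H N : Subgroup G) [N.Normal] :
    Nat.card ↥(H ⊔ N) ≤ Nat.card H * Nat.card N := by
  have := Set.natCard_mul_le (s := (H : Set G)) (t := N)
  rwa [← mul_normal] at this

theorem inf_ne_bot_of_card_lt [Finite G] {A B N : Subgroup G} (hA : A ≤ N) (hB : B ≤ N)
    (h : Nat.card N < Nat.card A * Nat.card B) : A ⊓ B ≠ ⊥ := fun hAB =>
  ((card_mul_card_le_card_sup (disjoint_iff.mpr hAB)).trans (card_le_of_le (sup_le hA hB))).not_gt h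

theorem card_sup_lt_card_sup_sq [Finite G] {N N' J K : Subgroup G} [N'.Normal]
    (hJK : Disjoint J K) (hJ : Nat.card N < Nat.card J ^ 2) (hK : Nat.card N' ≤ Nat.card K ^ 2) :
    Nat.card ↥(N ⊔ N') < Nat.card ↥(J ⊔ K) ^ 2 :=
  calc Nat.card ↥(N ⊔ N') ≤ Nat.card N * Nat.card N' := card_sup_le_of_normal N N'
    _ < Nat.card J ^ 2 * Nat.card N' := by gcongr; exact Nat.card_pos
    _ ≤ (Nat.card J * Nat.card K) ^ 2 := by rw [mul_pow]; gcongr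
    _ ≤ Nat.card ↥(J ⊔ K) ^ 2 := by gcongr; exact card_mul_card_le_card_sup hJK

end Subgroup

theorem conjSub_le {H N : Subgroup G} [hN : N.Normal] (h : H ≤ N) (g : G) : conjSub H g ≤ N := by
  rintro _ ⟨x, hx, rfl⟩
  exact hN.conj_mem x (h hx) g

theorem card_conjSub (H : Subgroup G) (g : G) : Nat.card (conjSub H g) = Nat.card H :=
  card_map_of_injective (MulAut.conj g).injective

namespace IsMinNormal

variable {N : Subgroup G}

theorem eq_bot_of_lt (hN : IsMinNormal N) {M : Subgroup G} (hM : M.Normal) (hMN : M < N) :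
    M = ⊥ :=
  (hN.2.2 M hM hMN.le).resolve_right hMN.ne

theorem disjoint_of_ne {N' : Subgroup G} (hN : IsMinNormal N) (hN' : IsMinNormal N')
    (hne : N ≠ N') : Disjoint N N' := by
  have := hN.2.1
  have := hN'.2.1
  rw [disjoint_iff]
  refine (hN.2.2 _ inferInstance inf_le_left).resolve_right fun h => ?_
  exact (hN'.2.2 N hN.2.1 (inf_eq_left.mp h)).elim hN.1 hne

theorem disjoint_centralizer (hN : IsMinNormal N) (hnab : ∃ x ∈ N, ∃ y ∈ N, x * y ≠ y * x) :
    Disjoint N (centralizer N) := by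
  have := hN.2.1
  rw [disjoint_iff]
  refine hN.eq_bot_of_lt inferInstance (inf_le_left.lt_of_ne fun h => ?_)
  obtain ⟨x, hx, y, hy, hxy⟩ := hnab
  exact hxy (inf_eq_left.mp h hy x hx)

theorem normalCore_sup_eq_bot {N' J K : Subgroup G} (hN : IsMinNormal N) (hN' : IsMinNormal N')
    (hnab : ∃ x ∈ N, ∃ y ∈ N, x * y ≠ y * x) (hdis : Disjoint N N') (hJ : J < N) (hK : K < N') :
    (J ⊔ K).normalCore = ⊥ := by
  have hNn := hN.2.1
  have hN'n := hN'.2.1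
  have hJK : J ≤ normalizer (K : Set G) :=
    hJ.le.trans <| (le_centralizer_of_disjoint hNn hN'n hdis).trans <|
      (centralizer_le hK.le).trans (centralizer_le_normalizer _)
  have hJK₁ : (J ⊔ K) ⊓ N = J := sup_inf_eq_left_of_disjoint hJK hJ.le (hdis.symm.mono_left hK.le)
  have hJK₂ : (J ⊔ K) ⊓ N' = K := sup_inf_eq_right_of_disjoint hJK hK.le (hdis.mono_left hJ.le)
  set M := (J ⊔ K).normalCore
  have hM : M.Normal := normalCore_normal _
  have hMN : Disjoint M N := disjoint_iff.mpr <| hN.eq_bot_of_lt inferInstance <|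
    ((inf_le_inf_right N (normalCore_le _)).trans_eq hJK₁).trans_lt hJ
  have hMN' : M ≤ N' :=
    calc M ≤ (N ⊔ N') ⊓ centralizer N :=
          le_inf ((normalCore_le _).trans (sup_le_sup hJ.le hK.le))
            (le_centralizer_of_disjoint hM hNn hMN)
      _ = N' := sup_inf_eq_right_of_disjoint le_normalizer_of_normal
          (le_centralizer_of_disjoint hN'n hNn hdis.symm) (hN.disjoint_centralizer hnab)
  exact hN'.eq_bot_of_lt hM (((le_inf (normalCore_le _) hMN').trans_eq hJK₂).trans_lt hK)

end IsMinNormal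

end

theorem stmt_18_general {G : Type*} [Group G] [Finite G]
    (N₁ N₂ : Subgroup G) (hmin₁ : IsMinNormal N₁) (hmin₂ : IsMinNormal N₂)
    (hnab : ∃ x ∈ N₁, ∃ y ∈ N₁, x * y ≠ y * x)
    (p a : ℕ) (hp : p.Prime) (ha : 2 ≤ a)
    (hiso : Nonempty (N₂ ≃* Multiplicative (Fin a → ZMod p)))
    (J : Subgroup G) (hJ : J < N₁) (hJbig : Nat.card N₁ < Nat.card J ^ 2)
    (K : Subgroup G) (hK : K < N₂) (hKcard : Nat.card K = p ^ (a - 1)) :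
    J.normalCore = ⊥ ∧ (J ⊔ K).normalCore = ⊥ ∧
      (∀ g : G, conjSub J g ≠ J ⊔ K) ∧
      (∀ g₁ g₂ : G, conjSub J g₁ ⊓ conjSub J g₂ ≠ ⊥) ∧
      (∀ g₁ g₂ : G, conjSub (J ⊔ K) g₁ ⊓ conjSub (J ⊔ K) g₂ ≠ ⊥) := by
  obtain ⟨e⟩ := hiso
  have hN₂card : Nat.card N₂ = p ^ a := by
    rw [Nat.card_congr (e.toEquiv.trans Multiplicative.toAdd), Nat.card_fun, Nat.card_zmod,
      Nat.card_eq_fintype_card, Fintype.card_fin]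
  have hdis : Disjoint N₁ N₂ := hmin₁.disjoint_of_ne hmin₂ <| by
    rintro rfl
    obtain ⟨x, hx, y, hy, hxy⟩ := hnab
    refine hxy (congrArg Subtype.val (e.injective ?_ : (⟨x, hx⟩ * ⟨y, hy⟩ : N₁) = ⟨y, hy⟩ * ⟨x, hx⟩))
    rw [map_mul, map_mul, mul_comm]
  have hK_ne : K ≠ ⊥ := (one_lt_card_iff_ne_bot K).mp (hKcard ▸ Nat.one_lt_pow (by omega) hp.one_lt)
  have := hmin₁.2.1
  have := hmin₂.2.1
  have hJKle : J ⊔ K ≤ N₁ ⊔ N₂ := sup_le_sup hJ.le hK.le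
  refine ⟨hmin₁.eq_bot_of_lt (normalCore_normal J) ((normalCore_le J).trans_lt hJ),
    hmin₁.normalCore_sup_eq_bot hmin₂ hnab hdis hJ hK, fun g h => ?_, fun g₁ g₂ => ?_,
    fun g₁ g₂ => ?_⟩
  · exact hK_ne <| (hdis.symm.mono_left hK.le).eq_bot_of_le
      (le_sup_right.trans (h ▸ conjSub_le hJ.le g))
  · apply inf_ne_bot_of_card_lt (conjSub_le hJ.le g₁) (conjSub_le hJ.le g₂)
    rwa [card_conjSub, card_conjSub, ← sq]
  · apply inf_ne_bot_of_card_lt (conjSub_le hJKle g₁) (conjSub_le hJKle g₂)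
    rw [card_conjSub, card_conjSub, ← sq]
    refine card_sup_lt_card_sup_sq (hdis.mono hJ.le hK.le) hJbig ?_
    rw [hN₂card, hKcard, ← pow_mul]
    exact Nat.pow_le_pow_right hp.pos (by omega)

/-- Let `G` be a finite group with `Φ(G) = 1`, with a minimal normal subgroup `N₁ = T`
that is nonabelian simple, and another minimal normal subgroup `N₂ ≅ (C_p)^a` with
`a ≥ 2`. If `J < N₁` satisfies `|J|² > |N₁|`, then for any `K < N₂` of order `p^(a-1)`,
the subgroups `H₁ = J` and `H₂ = J × K` are non-conjugate core-free subgroups of `G`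
with `b(G, Hᵢ) ≥ 3` for `i = 1, 2`; in particular `α(G) ≥ 2`. -/
theorem stmt_18 {G : Type*} [Group G] [Finite G] (hΦ : frattini G = ⊥)
    (N₁ N₂ : Subgroup G) (hmin₁ : IsMinNormal N₁) (hmin₂ : IsMinNormal N₂)
    (hsimple : IsSimpleGroup N₁) (hnab : ∃ x ∈ N₁, ∃ y ∈ N₁, x * y ≠ y * x)
    (p a : ℕ) (hp : p.Prime) (ha : 2 ≤ a)
    (hiso : Nonempty (N₂ ≃* Multiplicative (Fin a → ZMod p)))
    (J : Subgroup G) (hJ : J < N₁) (hJbig : Nat.card N₁ < Nat.card J ^ 2)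
    (K : Subgroup G) (hK : K < N₂) (hKcard : Nat.card K = p ^ (a - 1)) :
    J.normalCore = ⊥ ∧ (J ⊔ K).normalCore = ⊥ ∧
      (∀ g : G, conjSub J g ≠ J ⊔ K) ∧
      (∀ g₁ g₂ : G, conjSub J g₁ ⊓ conjSub J g₂ ≠ ⊥) ∧
      (∀ g₁ g₂ : G, conjSub (J ⊔ K) g₁ ⊓ conjSub (J ⊔ K) g₂ ≠ ⊥) :=
  stmt_18_general N₁ N₂ hmin₁ hmin₂ hnab p a hp ha hiso J hJ hJbig K hK hKcard
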